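/- arXiv:1911.08700 — 3 statements merged into one kernel-verified Lean document; each statement's English description precedes it below -/
import Mathlib

section
/- Let U be a D×D real symmetric positive semidefinite matrix of rank r, partitioned into blocks U_{ij} of size d_i×d_j where D = d_1+...+d_m. Suppose each diagonal block satisfies U_{ii} ⪯ I and tr(U_{ii}) = r. Then there exists a matrix O ∈ ℝ^{D×r}, partitioned into blocks O_i ∈ ℝ^{d_i×r}, such that U = O Oᵀ and O_iᵀ O_i = I for all i. -/
/-!
Factor `U = B Bᵀ` with `B` having `r` columns (spectral theorem), and let `Bᵢ` be the `i`-th block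
row of `B`, so `Uᵢᵢ = Bᵢ Bᵢᵀ`. Then `M = BᵢᵀBᵢ` is symmetric, `M - M² = Bᵢᵀ(I - Uᵢᵢ)Bᵢ ⪰ 0` and
`tr M = tr Uᵢᵢ = r`. Hence `tr (M - I)² = tr M² - r ≤ tr M - r = 0`, which forces `M = I`.
-/

open Matrix
open scoped ComplexOrder

namespace Matrix

theorem IsHermitian.eq_one_of_posSemidef_sub_mul_self {n R : Type*} [Fintype n] [DecidableEq n]
    [Ring R] [PartialOrder R] [StarRing R] [StarOrderedRing R] [NoZeroDivisors R]
    {M : Matrix n n R} (hM : M.IsHermitian) (h : (M - M * M).PosSemidef)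
    (htr : M.trace = Fintype.card n) : M = 1 := by
  have hsq : (M - 1)ᴴ * (M - 1) = -(M - M * M) - (M - 1) := by
    rw [conjTranspose_sub, hM.eq, conjTranspose_one]; noncomm_ring
  have htr_sq : ((M - 1)ᴴ * (M - 1)).trace ≤ 0 := by
    rw [hsq, trace_sub, trace_neg, trace_sub M 1, htr, trace_one, sub_self, sub_zero,
      neg_nonpos]
    exact h.trace_nonneg
  exact sub_eq_zero.mp <| trace_conjTranspose_mul_self_eq_zero_iff.mp <|
    htr_sq.antisymm (posSemidef_conjTranspose_mul_self _).trace_nonneg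

theorem conjTranspose_mul_self_eq_one_of_posSemidef_one_sub {m k R : Type*} [Fintype m]
    [DecidableEq m] [Fintype k] [DecidableEq k]
    [CommRing R] [PartialOrder R] [StarRing R] [StarOrderedRing R] [NoZeroDivisors R]
    {B : Matrix m k R} (h : (1 - B * Bᴴ).PosSemidef) (htr : (B * Bᴴ).trace = Fintype.card k) :
    Bᴴ * B = 1 := by
  refine (isHermitian_conjTranspose_mul_self B).eq_one_of_posSemidef_sub_mul_self ?_ ?_
  · convert h.conjTranspose_mul_mul_same B using 1
    simp only [Matrix.mul_sub, Matrix.sub_mul, Matrix.mul_one, Matrix.mul_assoc]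
  · rwa [trace_mul_comm]

theorem PosSemidef.exists_eq_mul_conjTranspose_of_rank_eq {n 𝕜 : Type*} [Fintype n]
    [DecidableEq n] [RCLike 𝕜] {A : Matrix n n 𝕜} (hA : A.PosSemidef) {r : ℕ}
    (hr : A.rank = r) : ∃ B : Matrix n (Fin r) 𝕜, A = B * Bᴴ := by
  set hH := hA.isHermitian
  set V : Matrix n n 𝕜 := (hH.eigenvectorUnitary : Matrix n n 𝕜)
  set S : Matrix n n 𝕜 := diagonal fun j => (√(hH.eigenvalues j) : 𝕜)
  have hS : S * Sᴴ = diagonal (RCLike.ofReal ∘ hH.eigenvalues) := by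
    rw [diagonal_conjTranspose, diagonal_mul_diagonal]
    congr 1 with j
    simp [← RCLike.ofReal_mul, Real.mul_self_sqrt (hA.eigenvalues_nonneg j)]
  set C := V * S
  have hC : A = C * Cᴴ := by
    rw [conjTranspose_mul, Matrix.mul_assoc, ← Matrix.mul_assoc S, hS, ← Matrix.mul_assoc]
    exact hH.spectral_theorem
  have hC0 : ∀ x j, hH.eigenvalues j = 0 → C x j = 0 := by
    intro x j hj
    simp [C, S, mul_diagonal, hj]
  obtain ⟨e⟩ : Nonempty ({j // hH.eigenvalues j ≠ 0} ≃ Fin r) :=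
    ⟨Fintype.equivFinOfCardEq (hH.rank_eq_card_non_zero_eigs.symm.trans hr)⟩
  refine ⟨C.submatrix id (Subtype.val ∘ e.symm), hC.trans ?_⟩
  ext x y
  simp only [conjTranspose_submatrix, mul_apply, submatrix_apply, id, Function.comp_apply]
  rw [e.symm.sum_comp (fun j => C x j * Cᴴ j y),
    ← Fintype.sum_subtype_add_sum_subtype (fun j => hH.eigenvalues j ≠ 0),
    add_eq_left]
  exact Finset.sum_eq_zero fun j _ => by rw [hC0 x j (not_not.mp j.2), zero_mul]

end Matrix

theorem stmt0_general (m r : ℕ) (d : Fin m → ℕ)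
    (U : Matrix ((i : Fin m) × Fin (d i)) ((i : Fin m) × Fin (d i)) ℝ)
    (hU : U.PosSemidef) (hrank : U.rank = r)
    (hdiag1 : ∀ i : Fin m,
      ((1 : Matrix (Fin (d i)) (Fin (d i)) ℝ) -
        Matrix.of fun a b => U ⟨i, a⟩ ⟨i, b⟩).PosSemidef)
    (hdiag2 : ∀ i : Fin m,
      (Matrix.of fun a b : Fin (d i) => U ⟨i, a⟩ ⟨i, b⟩).trace = (r : ℝ)) :
    ∃ O : Matrix ((i : Fin m) × Fin (d i)) (Fin r) ℝ,
      U = O * Oᵀ ∧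
      ∀ i : Fin m,
        (Matrix.of fun (a : Fin (d i)) (c : Fin r) => O ⟨i, a⟩ c)ᵀ *
          (Matrix.of fun (a : Fin (d i)) (c : Fin r) => O ⟨i, a⟩ c) = 1 := by
  obtain ⟨B, hB⟩ := hU.exists_eq_mul_conjTranspose_of_rank_eq hrank
  rw [conjTranspose_eq_transpose_of_trivial] at hB
  refine ⟨B, hB, fun i => ?_⟩
  set Bi : Matrix (Fin (d i)) (Fin r) ℝ := Matrix.of fun a c => B ⟨i, a⟩ c
  have hblock : (Matrix.of fun a b => U ⟨i, a⟩ ⟨i, b⟩) = Bi * Biᴴ := by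
    ext a b
    simp [Bi, hB, mul_apply]
  rw [← conjTranspose_eq_transpose_of_trivial]
  refine conjTranspose_mul_self_eq_one_of_posSemidef_one_sub ?_ ?_
  · rw [← hblock]; exact hdiag1 i
  · rw [← hblock, hdiag2 i, Fintype.card_fin]

/-- A D×D symmetric PSD matrix of rank r whose diagonal blocks satisfy
U_ii ⪯ I and tr(U_ii) = r factors as U = O Oᵀ with each block of O having
orthonormal columns. The index type `(i : Fin m) × Fin (d i)` encodes the block
partition D = d_1 + ... + d_m. -/
theorem stmt0 (m r : ℕ) (hm : 0 < m) (hr : 0 < r) (d : Fin m → ℕ)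
    (hd : ∀ i, 0 < d i) (hrd : ∀ i, r ≤ d i)
    (U : Matrix ((i : Fin m) × Fin (d i)) ((i : Fin m) × Fin (d i)) ℝ)
    (hU : U.PosSemidef) (hrank : U.rank = r)
    (hdiag1 : ∀ i : Fin m,
      ((1 : Matrix (Fin (d i)) (Fin (d i)) ℝ) -
        Matrix.of fun a b => U ⟨i, a⟩ ⟨i, b⟩).PosSemidef)
    (hdiag2 : ∀ i : Fin m,
      (Matrix.of fun a b : Fin (d i) => U ⟨i, a⟩ ⟨i, b⟩).trace = (r : ℝ)) :
    ∃ O : Matrix ((i : Fin m) × Fin (d i)) (Fin r) ℝ,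
      U = O * Oᵀ ∧
      ∀ i : Fin m,
        (Matrix.of fun (a : Fin (d i)) (c : Fin r) => O ⟨i, a⟩ c)ᵀ *
          (Matrix.of fun (a : Fin (d i)) (c : Fin r) => O ⟨i, a⟩ c) = 1 :=
  stmt0_general m r d U hU hrank hdiag1 hdiag2
end

section
/- Let V_i, Ṽ_i ∈ ℝ^{d×r} have orthonormal columns and suppose M := VᵀṼ = Σ_j V_jᵀṼ_j ∈ ℝ^{r×r} is symmetric positive semidefinite. Then tr((V_i − Ṽ_i)ᵀ V_i M) ≥ (1/2)·λ_min(M)·‖Ṽ_i − V_i‖_F², where λ_min(M) is the smallest eigenvalue of M. -/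
/-!
Since `V` and `Ṽ` have orthonormal columns, `(Ṽ - V)ᵀ(Ṽ - V) = 2 - ṼᵀV - VᵀṼ`, and for symmetric
`M` the two cross terms have the same trace against `M`. Hence the left-hand trace is exactly
`½ tr((Ṽ - V)ᵀ(Ṽ - V) M)`, and diagonalising `M` bounds `tr(P M) ≥ λ_min(M) tr P` for every
positive semidefinite `P`, while `tr((Ṽ - V)ᵀ(Ṽ - V)) = ‖Ṽ - V‖_F²`.
-/

open Matrix

noncomputable def frobNorm {m n : Type*} [Fintype m] [Fintype n] (A : Matrix m n ℝ) : ℝ :=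
  Real.sqrt (∑ i, ∑ j, (A i j) ^ 2)

variable {m n : Type*} [Fintype m] [Fintype n]

lemma frobNorm_sq_eq_trace_transpose_mul_self (A : Matrix m n ℝ) :
    frobNorm A ^ 2 = (Aᵀ * A).trace := by
  rw [frobNorm, Real.sq_sqrt (by positivity), trace, Finset.sum_comm]
  simp [mul_apply, sq]

lemma trace_transpose_mul_mul_of_isSymm {R : Type*} [CommSemiring R] {M : Matrix n n R}
    (hM : M.IsSymm) (A B : Matrix m n R) :
    (Aᵀ * B * M).trace = (Bᵀ * A * M).trace := by
  rw [← trace_transpose, transpose_mul, transpose_mul, transpose_transpose, hM.eq,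
    trace_mul_comm]

lemma two_mul_trace_sub_transpose_mul_mul {R : Type*} [CommRing R] [DecidableEq n]
    {V W : Matrix m n R} (hV : Vᵀ * V = 1) (hW : Wᵀ * W = 1) {M : Matrix n n R}
    (hM : M.IsSymm) :
    2 * ((V - W)ᵀ * V * M).trace = ((W - V)ᵀ * (W - V) * M).trace := by
  have hgram : (W - V)ᵀ * (W - V) = (1 - Wᵀ * V) + (1 - Vᵀ * W) := by
    simp only [transpose_sub, Matrix.sub_mul, Matrix.mul_sub, hV, hW]
    abel
  have hcross : (V - W)ᵀ * V = 1 - Wᵀ * V := by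
    rw [transpose_sub, Matrix.sub_mul, hV]
  rw [hgram, hcross, add_mul, trace_add, two_mul]
  simp only [sub_mul, trace_sub, trace_transpose_mul_mul_of_isSymm hM V W]

variable [DecidableEq n]

lemma Matrix.PosSemidef.iInf_eigenvalues_mul_trace_le_trace_mul {P M : Matrix n n ℝ}
    (hP : P.PosSemidef) (hM : M.IsHermitian) :
    (⨅ j, hM.eigenvalues j) * P.trace ≤ (P * M).trace := by
  cases isEmpty_or_nonempty n
  · simp [trace]
  set U := (hM.eigenvectorUnitary : Matrix n n ℝ)
  set Q := star U * P * U
  have htrace : Q.trace = P.trace := by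
    rw [trace_mul_comm, ← mul_assoc, Unitary.mul_star_self_of_mem hM.eigenvectorUnitary.2,
      one_mul]
  have htrace_mul : (P * M).trace = ∑ j, Q j j * hM.eigenvalues j := by
    conv_lhs => rw [hM.spectral_theorem, Unitary.conjStarAlgAut_apply, ← mul_assoc,
      trace_mul_cycle, ← mul_assoc]
    simp [trace, mul_diagonal, Q, U]
  rw [← htrace, htrace_mul, trace, Finset.mul_sum]
  refine Finset.sum_le_sum fun j _ => ?_
  rw [mul_comm]
  exact mul_le_mul_of_nonneg_left (ciInf_le (Finite.bddBelow_range _) j)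
    (hP.conjTranspose_mul_mul_same U).diag_nonneg

theorem stmt10_general (d r : ℕ) (Vi Vti : Matrix (Fin d) (Fin r) ℝ)
    (hVi : Viᵀ * Vi = 1) (hVti : Vtiᵀ * Vti = 1)
    (M : Matrix (Fin r) (Fin r) ℝ) (hM : M.PosSemidef) :
    (1 / 2) * (⨅ j, hM.isHermitian.eigenvalues j) * frobNorm (Vti - Vi) ^ 2 ≤
      ((Vi - Vti)ᵀ * Vi * M).trace := by
  have hsplit := two_mul_trace_sub_transpose_mul_mul hVi hVti
    (isHermitian_iff_isSymm.mp hM.isHermitian)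
  have hbound :=
    (posSemidef_conjTranspose_mul_self (Vti - Vi)).iInf_eigenvalues_mul_trace_le_trace_mul
      hM.isHermitian
  rw [conjTranspose_eq_transpose_of_trivial] at hbound
  rw [frobNorm_sq_eq_trace_transpose_mul_self]
  linarith

/-- For V_i, Ṽ_i with orthonormal columns and M symmetric PSD,
tr((V_i − Ṽ_i)ᵀ V_i M) ≥ (1/2) λ_min(M) ‖Ṽ_i − V_i‖_F². -/
theorem stmt10 (d r : ℕ) (hr : 0 < r) (Vi Vti : Matrix (Fin d) (Fin r) ℝ)
    (hVi : Viᵀ * Vi = 1) (hVti : Vtiᵀ * Vti = 1)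
    (M : Matrix (Fin r) (Fin r) ℝ) (hM : M.PosSemidef) :
    (1 / 2) * (⨅ j, hM.isHermitian.eigenvalues j) * frobNorm (Vti - Vi) ^ 2 ≤
      ((Vi - Vti)ᵀ * Vi * M).trace :=
  stmt10_general d r Vi Vti hVi hVti M hM
end

section
/- Let S ∈ ℝ^{D×D} be block-symmetric with S_{ii} = 0 and S_{ij} = V_i V_jᵀ for i ≠ j, where each V_i ∈ ℝ^{d_i×r} has orthonormal columns, and let V ∈ ℝ^{D×r} stack the V_i. Define T = −m Π_{L_2 ∩ L_1^⊥}, with L_1 = col(V) and L_2 = {x : x_i ∈ col(V_i)}. Then T satisfies: (a) T_{ij} = S_{ij} for i ≠ j; (b) T V = 0 (equivalently Π_{V^⊥} T Π_{V^⊥} = T); (c) T_{ii} = −(m−1) V_i V_iᵀ. -/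
/-!
Let `B = diag(V₁, …, V_m)`. Since `Bᵀ B = 1`, `Q = B Bᵀ` is the orthogonal projector onto
`L₂ = col B`; it fixes `V`, and `Vᵀ V = m • 1`. Removing the projector `m⁻¹ V Vᵀ` onto
`L₁ = col V ⊆ L₂` from `Q` leaves a symmetric idempotent `Q - m⁻¹ V Vᵀ` with range `L₂ ∩ L₁^⊥`.
A symmetric idempotent is determined by its range, so `P = Q - m⁻¹ V Vᵀ`, and all three claims
are read off from `-m P = -m Q + V Vᵀ`.
-/

open Matrix

namespace Matrix

section Projector

variable {R n k : Type*} [CommSemiring R]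

theorem isSymm_mul_transpose [Fintype k] (B : Matrix n k R) : (B * Bᵀ).IsSymm := by
  rw [IsSymm, transpose_mul, transpose_transpose]

variable [Fintype n]

theorem mem_range_mulVec_iff_of_isIdempotentElem {X : Matrix n n R} (hX : IsIdempotentElem X)
    {x : n → R} : x ∈ Set.range X.mulVec ↔ X *ᵥ x = x := by
  constructor
  · rintro ⟨v, rfl⟩
    rw [mulVec_mulVec, hX.eq]
  · exact fun h => ⟨x, h⟩

theorem mul_eq_right_of_range_mulVec_subset [Fintype k] {X : Matrix n n R} {Y : Matrix n k R}
    (hX : IsIdempotentElem X) (h : Set.range Y.mulVec ⊆ Set.range X.mulVec) : X * Y = Y :=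
  ext_iff_mulVec.2 fun v => by
    rw [← mulVec_mulVec]
    exact (mem_range_mulVec_iff_of_isIdempotentElem hX).1 (h ⟨v, rfl⟩)

theorem eq_of_range_mulVec_eq {P Q : Matrix n n R} (hPs : P.IsSymm) (hQs : Q.IsSymm)
    (hP : IsIdempotentElem P) (hQ : IsIdempotentElem Q)
    (h : Set.range P.mulVec = Set.range Q.mulVec) : P = Q :=
  calc P = (Q * P)ᵀ := by rw [mul_eq_right_of_range_mulVec_subset hQ h.le, hPs.eq]
    _ = P * Q := by rw [transpose_mul, hPs.eq, hQs.eq]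
    _ = Q := mul_eq_right_of_range_mulVec_subset hP h.ge

variable [Fintype k] [DecidableEq k] {B : Matrix n k R}

theorem isIdempotentElem_mul_transpose (hB : Bᵀ * B = 1) : IsIdempotentElem (B * Bᵀ) := by
  rw [IsIdempotentElem, Matrix.mul_assoc, ← Matrix.mul_assoc Bᵀ, hB, Matrix.one_mul]

theorem range_mulVec_mul_transpose (hB : Bᵀ * B = 1) :
    Set.range (B * Bᵀ).mulVec = Set.range B.mulVec := by
  apply subset_antisymm
  · rintro _ ⟨v, rfl⟩
    exact ⟨Bᵀ *ᵥ v, mulVec_mulVec _ _ _⟩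
  · rintro _ ⟨v, rfl⟩
    refine ⟨B *ᵥ v, ?_⟩
    rw [mulVec_mulVec, Matrix.mul_assoc, hB, Matrix.mul_one]

end Projector

section Deflate

variable {K n k : Type*} [Field K] [Fintype k]

/-- When `Vᵀ V = c • 1`, `c⁻¹ • V * Vᵀ` is the orthogonal projector onto the column space of `V`. -/
def deflate (Q : Matrix n n K) (V : Matrix n k K) (c : K) : Matrix n n K :=
  Q - c⁻¹ • (V * Vᵀ)

variable {Q : Matrix n n K} {V : Matrix n k K} {c : K}

theorem isSymm_deflate (hQs : Q.IsSymm) : (deflate Q V c).IsSymm :=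
  hQs.sub ((isSymm_mul_transpose V).smul _)

theorem neg_smul_deflate (hc : c ≠ 0) : (-c) • deflate Q V c = V * Vᵀ - c • Q := by
  rw [deflate, smul_sub, smul_smul, neg_mul, mul_inv_cancel₀ hc, neg_one_smul, neg_smul,
    sub_neg_eq_add, neg_add_eq_sub]

variable [Fintype n]

theorem mul_deflate (hQ : IsIdempotentElem Q) (hQV : Q * V = V) :
    Q * deflate Q V c = deflate Q V c := by
  rw [deflate, Matrix.mul_sub, Matrix.mul_smul, ← Matrix.mul_assoc, hQV, hQ.eq]

variable [DecidableEq k]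

theorem deflate_mul_self (hQV : Q * V = V) (hVV : Vᵀ * V = c • 1) (hc : c ≠ 0) :
    deflate Q V c * V = 0 := by
  rw [deflate, Matrix.sub_mul, Matrix.smul_mul, Matrix.mul_assoc, hVV, Matrix.mul_smul,
    Matrix.mul_one, smul_smul, inv_mul_cancel₀ hc, one_smul, hQV, sub_self]

theorem isIdempotentElem_deflate (hQs : Q.IsSymm) (hQ : IsIdempotentElem Q) (hQV : Q * V = V)
    (hVV : Vᵀ * V = c • 1) (hc : c ≠ 0) : IsIdempotentElem (deflate Q V c) := by
  have hDs := isSymm_deflate (V := V) (c := c) hQs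
  have hDQ : deflate Q V c * Q = deflate Q V c :=
    calc deflate Q V c * Q = (Q * deflate Q V c)ᵀ := by rw [transpose_mul, hQs.eq, hDs.eq]
      _ = deflate Q V c := by rw [mul_deflate hQ hQV, hDs.eq]
  change deflate Q V c * (Q - c⁻¹ • (V * Vᵀ)) = deflate Q V c
  rw [Matrix.mul_sub, Matrix.mul_smul, ← Matrix.mul_assoc, deflate_mul_self hQV hVV hc,
    Matrix.zero_mul, smul_zero, sub_zero, hDQ]

theorem range_mulVec_deflate (hQs : Q.IsSymm) (hQ : IsIdempotentElem Q) (hQV : Q * V = V)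
    (hVV : Vᵀ * V = c • 1) (hc : c ≠ 0) :
    Set.range (deflate Q V c).mulVec = {x | x ∈ Set.range Q.mulVec ∧ Vᵀ *ᵥ x = 0} := by
  have hVD : Vᵀ * deflate Q V c = 0 := by
    rw [← (isSymm_deflate hQs).eq, ← transpose_mul, deflate_mul_self hQV hVV hc, transpose_zero]
  ext x
  rw [mem_range_mulVec_iff_of_isIdempotentElem (isIdempotentElem_deflate hQs hQ hQV hVV hc),
    Set.mem_ofPred_eq, mem_range_mulVec_iff_of_isIdempotentElem hQ]
  constructor
  · intro hx
    rw [← hx, mulVec_mulVec, mulVec_mulVec, mul_deflate hQ hQV, hVD, zero_mulVec]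
    exact ⟨rfl, rfl⟩
  · rintro ⟨hQx, hVx⟩
    rw [deflate, sub_mulVec, smul_mulVec, ← mulVec_mulVec, hVx, mulVec_zero, smul_zero,
      sub_zero, hQx]

end Deflate

section Sigma

variable {R ι κ l : Type*} {d e : ι → Type*} [Fintype ι]

theorem mul_eq_sum_submatrix_sigma [∀ i, Fintype (d i)] [NonUnitalNonAssocSemiring R]
    (A : Matrix l (Σ i, d i) R) (B : Matrix (Σ i, d i) κ R) :
    A * B = ∑ i, A.submatrix id (Sigma.mk i) * B.submatrix (Sigma.mk i) id := by
  ext a c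
  simp only [mul_apply, sum_apply, submatrix_apply, id, ← Finset.univ_sigma_univ,
    Finset.sum_sigma]

variable [DecidableEq ι] [NonUnitalNonAssocSemiring R] [∀ i, Fintype (e i)]

theorem blockDiagonal'_mulVec_apply (M : ∀ i, Matrix (d i) (e i) R) (v : (Σ i, e i) → R)
    (i : ι) (a : d i) : (blockDiagonal' M *ᵥ v) ⟨i, a⟩ = (M i *ᵥ fun b => v ⟨i, b⟩) a := by
  simp only [mulVec, dotProduct, ← Finset.univ_sigma_univ, Finset.sum_sigma]
  rw [Fintype.sum_eq_single i fun j hj => Finset.sum_eq_zero fun b _ => by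
    rw [blockDiagonal'_apply_ne M a b (Ne.symm hj), zero_mul]]
  simp only [blockDiagonal'_apply_eq]

theorem range_mulVec_blockDiagonal' (M : ∀ i, Matrix (d i) (e i) R) :
    Set.range (blockDiagonal' M).mulVec =
      {x | ∀ i, ∃ y : e i → R, ∀ a, x ⟨i, a⟩ = (M i *ᵥ y) a} := by
  ext x
  constructor
  · rintro ⟨v, rfl⟩ i
    exact ⟨fun b => v ⟨i, b⟩, blockDiagonal'_mulVec_apply M v i⟩
  · intro h
    choose y hy using h
    refine ⟨fun q => y q.1 q.2, funext fun ⟨i, a⟩ => ?_⟩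
    rw [blockDiagonal'_mulVec_apply, hy]

end Sigma

section OrthonormalBlocks

variable {R ι κ : Type*} {d : ι → Type*} [CommSemiring R]

def blockDiagRows [DecidableEq ι] (V : Matrix (Σ i, d i) κ R) :
    Matrix (Σ i, d i) (Σ _ : ι, κ) R :=
  blockDiagonal' fun i => V.submatrix (Sigma.mk i) id

theorem blockDiagRows_mul_transpose_apply [Fintype ι] [DecidableEq ι] [Fintype κ]
    (V : Matrix (Σ i, d i) κ R) (p q : Σ i, d i) :
    (blockDiagRows V * (blockDiagRows V)ᵀ) p q =
      if p.1 = q.1 then ∑ c, V p c * V q c else 0 := by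
  obtain ⟨i, a⟩ := p
  obtain ⟨j, b⟩ := q
  rw [blockDiagRows, blockDiagonal'_transpose, ← blockDiagonal'_mul]
  by_cases h : i = j
  · subst h
    simp only [blockDiagonal'_apply_eq, mul_apply, transpose_apply, submatrix_apply, id, if_true]
  · rw [blockDiagonal'_apply_ne _ _ _ h, if_neg h]

variable [Fintype ι] [∀ i, Fintype (d i)] [DecidableEq κ] {V : Matrix (Σ i, d i) κ R}

theorem transpose_mul_self_eq_card_smul_one
    (hV : ∀ i, (V.submatrix (Sigma.mk i) id)ᵀ * V.submatrix (Sigma.mk i) id = 1) :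
    Vᵀ * V = (Fintype.card ι : R) • 1 := by
  rw [mul_eq_sum_submatrix_sigma]
  simp only [← transpose_submatrix, hV, Finset.sum_const, Finset.card_univ]
  exact (Nat.cast_smul_eq_nsmul R _ 1).symm

variable [DecidableEq ι]

theorem transpose_blockDiagRows_mul_self
    (hV : ∀ i, (V.submatrix (Sigma.mk i) id)ᵀ * V.submatrix (Sigma.mk i) id = 1) :
    (blockDiagRows V)ᵀ * blockDiagRows V = 1 := by
  rw [blockDiagRows, blockDiagonal'_transpose, ← blockDiagonal'_mul]
  exact (congrArg blockDiagonal' (funext hV)).trans blockDiagonal'_one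

variable [Fintype κ]

theorem range_mulVec_blockDiagRows_mul_transpose
    (hV : ∀ i, (V.submatrix (Sigma.mk i) id)ᵀ * V.submatrix (Sigma.mk i) id = 1) :
    Set.range (blockDiagRows V * (blockDiagRows V)ᵀ).mulVec =
      {x | ∀ i, ∃ y : κ → R, ∀ a, x ⟨i, a⟩ = (V.submatrix (Sigma.mk i) id *ᵥ y) a} :=
  (range_mulVec_mul_transpose (transpose_blockDiagRows_mul_self hV)).trans
    (range_mulVec_blockDiagonal' _)

theorem blockDiagRows_mul_transpose_mul_self
    (hV : ∀ i, (V.submatrix (Sigma.mk i) id)ᵀ * V.submatrix (Sigma.mk i) id = 1) :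
    blockDiagRows V * (blockDiagRows V)ᵀ * V = V := by
  refine mul_eq_right_of_range_mulVec_subset
    (isIdempotentElem_mul_transpose (transpose_blockDiagRows_mul_self hV)) ?_
  rw [range_mulVec_blockDiagRows_mul_transpose hV]
  rintro _ ⟨y, rfl⟩ i
  exact ⟨y, fun a => rfl⟩

end OrthonormalBlocks

end Matrix

/-- Let S have zero diagonal blocks and off-diagonal blocks V_iV_jᵀ,
where the blocks V_i of V have orthonormal columns. Let P be the orthogonal
projector (symmetric idempotent with the indicated range) onto
L₂ ∩ L₁^⊥ = {x : x_i ∈ col(V_i) ∀i, and Vᵀx = 0}. Then T = −m·P satisfies: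
(a) T agrees with S off the block diagonal; (b) T V = 0;
(c) the diagonal blocks of T are −(m−1) V_iV_iᵀ. -/
theorem stmt15 (m r : ℕ) (hm : 0 < m) (d : Fin m → ℕ)
    (V : Matrix ((i : Fin m) × Fin (d i)) (Fin r) ℝ)
    (hV : ∀ i : Fin m,
      (Matrix.of fun (a : Fin (d i)) (c : Fin r) => V ⟨i, a⟩ c)ᵀ *
        (Matrix.of fun (a : Fin (d i)) (c : Fin r) => V ⟨i, a⟩ c) = 1)
    (S : Matrix ((i : Fin m) × Fin (d i)) ((i : Fin m) × Fin (d i)) ℝ)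
    (hS : ∀ p q : (i : Fin m) × Fin (d i),
      S p q = if p.1 = q.1 then 0 else ∑ c, V p c * V q c)
    (P : Matrix ((i : Fin m) × Fin (d i)) ((i : Fin m) × Fin (d i)) ℝ)
    (hPsymm : Pᵀ = P) (hPidem : P * P = P)
    (hPrange : Set.range P.mulVec =
      {x | (∀ i : Fin m, ∃ y : Fin r → ℝ, ∀ a : Fin (d i),
        x ⟨i, a⟩ = (Matrix.of fun (a : Fin (d i)) (c : Fin r) => V ⟨i, a⟩ c).mulVec y a) ∧
        Vᵀ *ᵥ x = 0}) :
    (∀ p q : (i : Fin m) × Fin (d i), p.1 ≠ q.1 → ((-(m : ℝ)) • P) p q = S p q) ∧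
    ((-(m : ℝ)) • P) * V = 0 ∧
    (∀ (i : Fin m) (a b : Fin (d i)),
      ((-(m : ℝ)) • P) ⟨i, a⟩ ⟨i, b⟩ = -((m : ℝ) - 1) * ∑ c, V ⟨i, a⟩ c * V ⟨i, b⟩ c) := by
  have hV' : ∀ i, (V.submatrix (Sigma.mk i) id)ᵀ * V.submatrix (Sigma.mk i) id = 1 := hV
  have hm0 : (m : ℝ) ≠ 0 := Nat.cast_ne_zero.2 hm.ne'
  have hQs := isSymm_mul_transpose (blockDiagRows V)
  have hQ := isIdempotentElem_mul_transpose (transpose_blockDiagRows_mul_self hV')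
  have hQV := blockDiagRows_mul_transpose_mul_self hV'
  have hVV : Vᵀ * V = (m : ℝ) • 1 := by
    simpa only [Fintype.card_fin] using transpose_mul_self_eq_card_smul_one hV'
  have hPD : P = deflate (blockDiagRows V * (blockDiagRows V)ᵀ) V m :=
    eq_of_range_mulVec_eq hPsymm (isSymm_deflate hQs) hPidem
      (isIdempotentElem_deflate hQs hQ hQV hVV hm0) <| by
        rw [hPrange, range_mulVec_deflate hQs hQ hQV hVV hm0,
          range_mulVec_blockDiagRows_mul_transpose hV']
        rfl
  subst hPD
  have hT : ∀ p q, ((-(m : ℝ)) • deflate (blockDiagRows V * (blockDiagRows V)ᵀ) V m) p q =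
      ∑ c, V p c * V q c - m * (blockDiagRows V * (blockDiagRows V)ᵀ) p q := fun p q => by
    rw [neg_smul_deflate hm0]
    simp only [Matrix.sub_apply, Matrix.smul_apply, mul_apply, transpose_apply, smul_eq_mul]
  refine ⟨fun p q hpq => ?_, ?_, fun i a b => ?_⟩
  · rw [hT, hS, blockDiagRows_mul_transpose_apply, if_neg hpq, if_neg hpq]
    ring
  · rw [smul_mul, deflate_mul_self hQV hVV hm0, smul_zero]
  · rw [hT, blockDiagRows_mul_transpose_apply, if_pos rfl]
    ring
end
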